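/- Let {hₙ} be a sequence of harmonic functions on an open set U ⊆ ℂ, uniformly bounded by M, that converges pointwise on a dense subset of U. Then {hₙ} converges uniformly on every compact subset of U, and the limit function is harmonic on U. -/

import Mathlib

/-- A real-valued function on `ℂ` is harmonic on a set if it is `C²` there and its
Laplacian (sum of the two repeated directional derivatives along `1` and `I`) vanishes. -/
def HarmonicOnSet (u : ℂ → ℝ) (U : Set ℂ) : Prop :=
  ContDiffOn ℝ 2 u U ∧
  ∀ z ∈ U, fderiv ℝ (fun w => fderiv ℝ u w 1) z 1
    + fderiv ℝ (fun w => fderiv ℝ u w Complex.I) z Complex.I = 0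

open Complex Metric Set Filter



noncomputable section

/-- `T c` is the real-linear functional `v ↦ Re (c * v)`. -/
def T (c : ℂ) : ℂ →L[ℝ] ℝ :=
  Complex.reCLM.comp ((ContinuousLinearMap.mul ℂ ℂ c).restrictScalars ℝ)

@[simp] lemma T_apply (c v : ℂ) : T c v = (c * v).re := rfl

lemma T_norm_le (c : ℂ) : ‖T c‖ ≤ ‖c‖ := by
  refine ContinuousLinearMap.opNorm_le_bound _ (norm_nonneg c) (fun v => ?_)
  simp only [T_apply]
  calc ‖(c * v).re‖ ≤ ‖c * v‖ := by
        simpa [Real.norm_eq_abs] using Complex.abs_re_le_norm (c * v)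
    _ = ‖c‖ * ‖v‖ := by simp

lemma T_sub (a b : ℂ) : T (a - b) = T a - T b := by
  ext v; simp [T_apply, sub_mul]

/-- The "complex gradient" `u_x - i u_y` of a real function. -/
def fd (u : ℂ → ℝ) (z : ℂ) : ℂ :=
  (fderiv ℝ u z 1 : ℂ) - (fderiv ℝ u z Complex.I : ℂ) * Complex.I

lemma T_fd_eq (u : ℂ → ℝ) (z : ℂ) :
    T (fd u z) = fderiv ℝ u z := by
  ext v
  have hv : v = (v.re : ℝ) • (1 : ℂ) + (v.im : ℝ) • Complex.I := by
    simp [Complex.real_smul, Complex.re_add_im]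
  rw [T_apply]
  conv_rhs => rw [hv]
  rw [map_add, map_smul, map_smul]
  simp [fd, Complex.mul_re]
  ring

end
noncomputable section
open ContinuousLinearMap in
/-- The continuous linear map sending `A : ℂ →L[ℝ] ℝ` to `A 1 - (A I) • I : ℂ`. -/
def psi : (ℂ →L[ℝ] ℝ) →L[ℝ] ℂ :=
  Complex.ofRealCLM.comp (ContinuousLinearMap.apply ℝ ℝ (1 : ℂ))
    - (ContinuousLinearMap.apply ℝ ℝ (Complex.I)).smulRight Complex.I

@[simp] lemma psi_apply (A : ℂ →L[ℝ] ℝ) :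
    psi A = (A 1 : ℂ) - (A Complex.I : ℂ) * Complex.I := by
  simp [psi, Complex.real_smul]

lemma fd_eq_psi (u : ℂ → ℝ) : fd u = fun z => psi (fderiv ℝ u z) := by
  funext z; simp [fd]

section CR
variable {U : Set ℂ} {u : ℂ → ℝ} {z : ℂ}

lemma harm_diffAt (hU : IsOpen U) (hu : HarmonicOnSet u U) (hz : z ∈ U) :
    DifferentiableAt ℝ u z :=
  (hu.1.differentiableOn two_ne_zero).differentiableAt (hU.mem_nhds hz)

lemma harm_hasFDerivAt (hU : IsOpen U) (hu : HarmonicOnSet u U) (hz : z ∈ U) :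
    HasFDerivAt u (T (fd u z)) z := by
  rw [T_fd_eq]; exact (harm_diffAt hU hu hz).hasFDerivAt

lemma harm_fderiv_hasFDerivAt (hU : IsOpen U) (hu : HarmonicOnSet u U) (hz : z ∈ U) :
    HasFDerivAt (fderiv ℝ u) (fderiv ℝ (fderiv ℝ u) z) z := by
  have h1 : ContDiffAt ℝ 2 u z := hu.1.contDiffAt (hU.mem_nhds hz)
  have h2 : ContDiffAt ℝ 1 (fderiv ℝ u) z := h1.fderiv_right (by norm_num)
  exact (h2.differentiableAt (by norm_num)).hasFDerivAt

/-- Second derivative evaluated: `fderiv (fun w => fderiv u w v) z d = H d v`. -/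
lemma second_eval (hU : IsOpen U) (hu : HarmonicOnSet u U) (hz : z ∈ U) (v d : ℂ) :
    fderiv ℝ (fun w => fderiv ℝ u w v) z d = fderiv ℝ (fderiv ℝ u) z d v := by
  have h := ((ContinuousLinearMap.apply ℝ ℝ v).hasFDerivAt).comp z
    (harm_fderiv_hasFDerivAt hU hu hz)
  have he : (fun w => fderiv ℝ u w v)
      = ⇑(ContinuousLinearMap.apply ℝ ℝ v) ∘ fderiv ℝ u := rfl
  rw [he, h.fderiv]
  rfl

lemma second_symm (hU : IsOpen U) (hu : HarmonicOnSet u U) (hz : z ∈ U) (v w : ℂ) :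
    fderiv ℝ (fderiv ℝ u) z v w = fderiv ℝ (fderiv ℝ u) z w v := by
  refine second_derivative_symmetric_of_eventually (f := u) ?_ (harm_fderiv_hasFDerivAt hU hu hz) v w
  filter_upwards [hU.mem_nhds hz] with y hy
  exact (harm_diffAt hU hu hy).hasFDerivAt

lemma harm_fd_hasDerivAt (hU : IsOpen U) (hu : HarmonicOnSet u U) (hz : z ∈ U) :
    HasDerivAt (fd u) (psi (fderiv ℝ (fderiv ℝ u) z 1)) z := by
  set H := fderiv ℝ (fderiv ℝ u) z with hH
  have hreal : HasFDerivAt (fd u) (psi.comp H) z := by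
    rw [fd_eq_psi]
    exact psi.hasFDerivAt.comp z (harm_fderiv_hasFDerivAt hU hu hz)
  set c : ℂ := psi (H 1) with hc
  have hlap : H 1 1 + H Complex.I Complex.I = 0 := by
    have := hu.2 z hz
    rwa [second_eval hU hu hz 1 1, second_eval hU hu hz Complex.I Complex.I] at this
  have hsymm : H 1 Complex.I = H Complex.I 1 := second_symm hU hu hz 1 Complex.I
  have hkey : psi.comp H = ((1 : ℂ →L[ℂ] ℂ).smulRight c).restrictScalars ℝ := by
    ext v
    have hv : v = (v.re : ℝ) • (1 : ℂ) + (v.im : ℝ) • Complex.I := by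
      simp [Complex.real_smul, Complex.re_add_im]
    rw [ContinuousLinearMap.coe_restrictScalars']
    show psi (H v) = ((1 : ℂ →L[ℂ] ℂ).smulRight c) v
    conv_lhs => rw [hv]
    rw [map_add, map_smul, map_smul, map_add, map_smul, map_smul]
    simp only [ContinuousLinearMap.smulRight_apply, ContinuousLinearMap.one_apply,
      smul_eq_mul, psi_apply, hc]
    have e1 : H Complex.I 1 = H 1 Complex.I := hsymm.symm
    have e2 : H Complex.I Complex.I = -(H 1 1) := by linarith
    rw [e1, e2]
    apply Complex.ext <;> simp [Complex.mul_re, Complex.mul_im] <;> ring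
  have : HasFDerivAt (𝕜 := ℂ) (fd u) ((1 : ℂ →L[ℂ] ℂ).smulRight c) z :=
    hasFDerivAt_of_restrictScalars ℝ hreal hkey.symm
  simpa using this.hasDerivAt
end CR
end

section INT
open intervalIntegral Real

noncomputable section

lemma circle_mean {F : ℂ → ℂ} {z₀ : ℂ} {s : ℝ} (hs : 0 < s)
    (hd : DifferentiableOn ℂ F (Metric.ball z₀ s))
    (hc : ContinuousOn F (Metric.closedBall z₀ s)) :
    (∫ θ in (0:ℝ)..2*Real.pi, F (z₀ + ↑s * Complex.exp (↑θ * Complex.I)))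
      = 2 * Real.pi * F z₀ := by
  have hcl : DiffContOnCl ℂ F (Metric.ball z₀ s) :=
    ⟨hd, hc.mono (by rw [closure_ball z₀ hs.ne']) ⟩
  have h := hcl.circleIntegral_sub_inv_smul (Metric.mem_ball_self hs)
  rw [circleIntegral] at h
  simp only [deriv_circleMap, circleMap, smul_eq_mul, add_sub_cancel_left, zero_add] at h
  have hne : ∀ θ : ℝ, (↑s * Complex.exp (↑θ * Complex.I)) ≠ 0 := fun θ =>
    mul_ne_zero (by exact_mod_cast hs.ne') (Complex.exp_ne_zero _)
  have he : ∀ θ : ℝ, ↑s * Complex.exp (↑θ * Complex.I) * Complex.I *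
      ((↑s * Complex.exp (↑θ * Complex.I))⁻¹ * F (z₀ + ↑s * Complex.exp (↑θ * Complex.I)))
      = Complex.I * F (z₀ + ↑s * Complex.exp (↑θ * Complex.I)) := by
    intro θ
    rw [show ∀ a b c : ℂ, a * b * (a⁻¹ * c) = b * (a * a⁻¹ * c) from fun a b c => by ring,
      mul_inv_cancel₀ (hne θ), one_mul]
  rw [intervalIntegral.integral_congr (fun θ _ => he θ), intervalIntegral.integral_const_mul] at h
  have := h
  apply mul_left_cancel₀ Complex.I_ne_zero
  rw [this]
  push_cast
  ring

lemma circle_zero {F : ℂ → ℂ} {z₀ : ℂ} {s : ℝ} (hs : 0 < s)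
    (hd : ∀ z ∈ Metric.ball z₀ s, DifferentiableAt ℂ F z)
    (hc : ContinuousOn F (Metric.closedBall z₀ s)) :
    (∫ θ in (0:ℝ)..2*Real.pi, F (z₀ + ↑s * Complex.exp (↑θ * Complex.I))
        * (Complex.exp (↑θ * Complex.I))^2) = 0 := by
  have h := circleIntegral_eq_zero_of_differentiable_on_off_countable (f := fun w => F w * (w - z₀))
    hs.le Set.countable_empty
    (hc.mul ((continuous_id.sub continuous_const).continuousOn))
    (fun z hz => ((hd z hz.1).mul ((differentiable_id.sub (differentiable_const _)).differentiableAt)))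
  rw [circleIntegral] at h
  simp only [deriv_circleMap, circleMap, smul_eq_mul, add_sub_cancel_left, zero_add] at h
  have he : ∀ θ : ℝ, ↑s * Complex.exp (↑θ * Complex.I) * Complex.I *
      (F (z₀ + ↑s * Complex.exp (↑θ * Complex.I)) * (↑s * Complex.exp (↑θ * Complex.I)))
      = (Complex.I * s^2) * (F (z₀ + ↑s * Complex.exp (↑θ * Complex.I))
          * (Complex.exp (↑θ * Complex.I))^2) := by
    intro θ; ring
  rw [intervalIntegral.integral_congr (fun θ _ => he θ), intervalIntegral.integral_const_mul] at h
  have hne : (Complex.I * (s:ℂ)^2) ≠ 0 :=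
    mul_ne_zero Complex.I_ne_zero (pow_ne_zero _ (by exact_mod_cast hs.ne'))
  exact (mul_eq_zero.mp h).resolve_left hne
end

noncomputable section

lemma my_integral_conj {f : ℝ → ℂ} {a b : ℝ} :
    (∫ x in a..b, (starRingEnd ℂ) (f x)) = (starRingEnd ℂ) (∫ x in a..b, f x) := by
  rw [intervalIntegral, intervalIntegral, map_sub, integral_conj, integral_conj]

lemma exp_circle_int {c : ℂ} (hc : c ≠ 0) (h1 : Complex.exp (c * (2*Real.pi)) = 1) :
    (∫ θ in (0:ℝ)..2*Real.pi, Complex.exp (c * θ)) = 0 := by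
  rw [integral_exp_mul_complex hc]
  push_cast
  rw [h1]
  simp

lemma exp_two : Complex.exp ((2*Complex.I) * ((2*Real.pi : ℝ) : ℂ)) = 1 := by
  have h : (2*Complex.I) * ((2*Real.pi : ℝ) : ℂ) = ((2:ℕ):ℂ) * (2*(Real.pi:ℂ)*Complex.I) := by
    push_cast; ring
  rw [h, Complex.exp_nat_mul, Complex.exp_two_pi_mul_I, one_pow]

lemma exp_sq (θ : ℝ) : Complex.exp (↑θ * Complex.I)^2 = Complex.exp ((2*Complex.I) * ↑θ) := by
  rw [← Complex.exp_nat_mul]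
  push_cast
  ring_nf

lemma norm_exp_neg_tI (θ : ℝ) : ‖Complex.exp (-(↑θ * Complex.I))‖ = 1 := by
  rw [show -((θ:ℂ) * Complex.I) = ((-θ : ℝ) : ℂ) * Complex.I by push_cast; ring,
    Complex.norm_exp_ofReal_mul_I]

lemma conj_exp_neg_tI (θ : ℝ) :
    (starRingEnd ℂ) (Complex.exp (-(↑θ * Complex.I))) = Complex.exp (↑θ * Complex.I) := by
  rw [← Complex.exp_conj]
  congr 1
  simp

lemma exp_mul_exp_neg_tI (θ : ℝ) :
    Complex.exp (↑θ * Complex.I) * Complex.exp (-(↑θ * Complex.I)) = 1 := by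
  rw [← Complex.exp_add]; simp

/-- pointwise rewriting of the integrand -/
lemma integrand_eq (A : ℂ) (θ : ℝ) :
    (((A * Complex.exp (↑θ * Complex.I)).re : ℝ) : ℂ) * Complex.exp (-(↑θ * Complex.I))
      = (2:ℂ)⁻¹ * A + (2:ℂ)⁻¹ * (starRingEnd ℂ) (A * Complex.exp (↑θ * Complex.I)^2) := by
  set e := Complex.exp (↑θ * Complex.I) with he
  set w := A * e with hw
  have h1 : (w.re : ℂ) = (w + (starRingEnd ℂ) w)/2 := by
    rw [Complex.add_conj]; push_cast; ring
  have h2 : (starRingEnd ℂ) (A * e^2) = (starRingEnd ℂ) w * (starRingEnd ℂ) e := by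
    rw [← map_mul]; congr 1; rw [hw]; ring
  have h3 : (starRingEnd ℂ) e = Complex.exp (-(↑θ * Complex.I)) := by
    rw [he, ← Complex.exp_conj]; congr 1; simp
  have h4 := exp_mul_exp_neg_tI θ
  rw [← he] at h4
  have h5 : w * Complex.exp (-(↑θ * Complex.I)) = A := by
    rw [hw, mul_assoc, h4, mul_one]
  have h6 : (starRingEnd ℂ) (A * e^2)
      = (starRingEnd ℂ) w * Complex.exp (-(↑θ * Complex.I)) := by rw [h2, h3]
  calc (((A * e).re : ℝ) : ℂ) * Complex.exp (-(↑θ * Complex.I))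
      = ((w + (starRingEnd ℂ) w)/2) * Complex.exp (-(↑θ * Complex.I)) := by rw [← hw, h1]
    _ = (2:ℂ)⁻¹ * (w * Complex.exp (-(↑θ * Complex.I)))
        + (2:ℂ)⁻¹ * ((starRingEnd ℂ) w * Complex.exp (-(↑θ * Complex.I))) := by ring
    _ = (2:ℂ)⁻¹ * A + (2:ℂ)⁻¹ * (starRingEnd ℂ) (A * e^2) := by rw [h5, ← h6]
end

end INT
section INT2
open intervalIntegral Real
variable {U : Set ℂ} {u : ℂ → ℝ} {z₀ : ℂ} {r : ℝ}

lemma harm_fderiv_contDiffOn (hU : IsOpen U) (hu : HarmonicOnSet u U) :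
    ContDiffOn ℝ 1 (fderiv ℝ u) U := by
  have h2 : ContDiffOn ℝ ((1:WithTop ℕ∞)+1) u U := by rw [one_add_one_eq_two]; exact hu.1
  exact ((contDiffOn_succ_iff_fderiv_of_isOpen hU).mp h2).2.2

lemma harm_fd_contOn (hU : IsOpen U) (hu : HarmonicOnSet u U) : ContinuousOn (fd u) U := by
  rw [fd_eq_psi]
  exact psi.continuous.comp_continuousOn (harm_fderiv_contDiffOn hU hu).continuousOn

lemma harm_fd_diffAt (hU : IsOpen U) (hu : HarmonicOnSet u U) {z : ℂ} (hz : z ∈ U) :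
    DifferentiableAt ℂ (fd u) z := (harm_fd_hasDerivAt hU hu hz).differentiableAt

lemma cont_path (z₀ : ℂ) (s : ℝ) : Continuous fun θ:ℝ => z₀ + (s:ℂ) * Complex.exp (↑θ * Complex.I) :=
  continuous_const.add (continuous_const.mul
    (Complex.continuous_exp.comp (Complex.continuous_ofReal.mul continuous_const)))

lemma mem_cball (z₀ : ℂ) {s r : ℝ} (hs0 : 0 ≤ s) (hsr : s ≤ r) (θ : ℝ) :
    z₀ + (s:ℂ) * Complex.exp (↑θ * Complex.I) ∈ closedBall z₀ r := by
  rw [Metric.mem_closedBall, dist_eq_norm, add_sub_cancel_left, norm_mul,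
    Complex.norm_exp_ofReal_mul_I, mul_one, Complex.norm_real, Real.norm_eq_abs,
    _root_.abs_of_nonneg hs0]
  exact hsr

lemma cont_exp_tI : Continuous fun θ:ℝ => Complex.exp (↑θ * Complex.I) :=
  Complex.continuous_exp.comp (Complex.continuous_ofReal.mul continuous_const)

lemma ident (hU : IsOpen U) (hu : HarmonicOnSet u U) (hr : 0 < r)
    (hball : closedBall z₀ r ⊆ U) {s : ℝ} (hs0 : 0 ≤ s) (hsr : s < r) :
    (∫ θ in (0:ℝ)..2*Real.pi,
        (((fd u (z₀ + ↑s * Complex.exp (↑θ * Complex.I)) * Complex.exp (↑θ * Complex.I)).re : ℝ) : ℂ)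
          * Complex.exp (-(↑θ * Complex.I)))
      = Real.pi * fd u z₀ := by
  have hmem : ∀ θ : ℝ, z₀ + ↑s * Complex.exp (↑θ * Complex.I) ∈ U :=
    fun θ => hball (mem_cball z₀ hs0 hsr.le θ)
  have hA : Continuous fun θ:ℝ => fd u (z₀ + ↑s * Complex.exp (↑θ * Complex.I)) :=
    (harm_fd_contOn hU hu).comp_continuous (cont_path z₀ s) hmem
  rw [intervalIntegral.integral_congr
    (g := fun θ:ℝ => (2:ℂ)⁻¹ * (fd u (z₀ + ↑s * Complex.exp (↑θ * Complex.I)))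
      + (2:ℂ)⁻¹ * (starRingEnd ℂ) ((fd u (z₀ + ↑s * Complex.exp (↑θ * Complex.I)))
          * Complex.exp (↑θ * Complex.I)^2))
    (fun θ _ => integrand_eq _ θ)]
  have hstar : Continuous fun θ:ℝ => (starRingEnd ℂ)
      ((fd u (z₀ + ↑s * Complex.exp (↑θ * Complex.I))) * Complex.exp (↑θ * Complex.I)^2) :=
    continuous_star.comp (hA.mul (cont_exp_tI.pow 2))
  rw [intervalIntegral.integral_add
      ((show Continuous fun θ:ℝ => (2:ℂ)⁻¹ * fd u (z₀ + ↑s * Complex.exp (↑θ * Complex.I))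
        from continuous_const.mul hA).intervalIntegrable _ _)
      ((show Continuous fun θ:ℝ => (2:ℂ)⁻¹ * (starRingEnd ℂ)
          ((fd u (z₀ + ↑s * Complex.exp (↑θ * Complex.I))) * Complex.exp (↑θ * Complex.I)^2)
        from continuous_const.mul hstar).intervalIntegrable _ _),
    intervalIntegral.integral_const_mul, intervalIntegral.integral_const_mul]
  have hconjint : (∫ θ in (0:ℝ)..2*Real.pi, (starRingEnd ℂ)
      ((fd u (z₀ + ↑s * Complex.exp (↑θ * Complex.I))) * Complex.exp (↑θ * Complex.I)^2))
      = (starRingEnd ℂ) (∫ θ in (0:ℝ)..2*Real.pi,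
        (fd u (z₀ + ↑s * Complex.exp (↑θ * Complex.I))) * Complex.exp (↑θ * Complex.I)^2) :=
    my_integral_conj
  rw [hconjint]
  rcases eq_or_lt_of_le hs0 with h0 | hpos
  · -- s = 0
    simp only [← h0, Complex.ofReal_zero, zero_mul, add_zero]
    rw [intervalIntegral.integral_const, intervalIntegral.integral_const_mul]
    have hz : (∫ θ in (0:ℝ)..2*Real.pi, Complex.exp (↑θ*Complex.I)^2) = 0 := by
      rw [intervalIntegral.integral_congr (fun θ _ => exp_sq θ)]
      refine exp_circle_int (mul_ne_zero two_ne_zero Complex.I_ne_zero) ?_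
      have := exp_two
      rw [show (((2*Real.pi : ℝ)):ℂ) = 2*(Real.pi:ℂ) by push_cast; ring] at this
      exact this
    rw [hz, mul_zero, map_zero, mul_zero, add_zero, sub_zero]
    rw [Complex.real_smul]
    push_cast
    ring
  · -- s > 0
    have hsub : closedBall z₀ s ⊆ U :=
      (Metric.closedBall_subset_closedBall hsr.le).trans hball
    have hc : ContinuousOn (fd u) (closedBall z₀ s) := (harm_fd_contOn hU hu).mono hsub
    have hd : DifferentiableOn ℂ (fd u) (Metric.ball z₀ s) := fun z hz =>
      (harm_fd_diffAt hU hu (hsub (Metric.ball_subset_closedBall hz))).differentiableWithinAt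
    have hd' : ∀ z ∈ Metric.ball z₀ s, DifferentiableAt ℂ (fd u) z := fun z hz =>
      harm_fd_diffAt hU hu (hsub (Metric.ball_subset_closedBall hz))
    rw [circle_mean hpos hd hc, circle_zero hpos hd' hc, map_zero, mul_zero, add_zero]
    push_cast
    ring
end INT2

section GB
open intervalIntegral Real MeasureTheory
variable {U : Set ℂ} {u : ℂ → ℝ} {z₀ : ℂ} {r C : ℝ}

lemma grad_bound (hU : IsOpen U) (hu : HarmonicOnSet u U) (hr : 0 < r)
    (hball : Metric.closedBall z₀ r ⊆ U)
    (hC : ∀ w ∈ Metric.closedBall z₀ r, |u w| ≤ C) :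
    ‖fd u z₀‖ ≤ 4 * C / r := by
  obtain ⟨Cf, hCf⟩ := (isCompact_closedBall z₀ r).exists_bound_of_continuousOn
    ((harm_fd_contOn hU hu).mono hball)
  set F : ℝ → ℝ → ℂ := fun x θ => ((u (z₀ + (x:ℂ) * Complex.exp (↑θ * Complex.I)) : ℝ) : ℂ)
      * Complex.exp (-(↑θ * Complex.I)) with hF
  set F' : ℝ → ℝ → ℂ := fun x θ =>
      (((fd u (z₀ + (x:ℂ) * Complex.exp (↑θ * Complex.I)) * Complex.exp (↑θ * Complex.I)).re : ℝ) : ℂ)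
        * Complex.exp (-(↑θ * Complex.I)) with hF'
  set φ : ℝ → ℂ := fun x => ∫ θ in (0:ℝ)..2*Real.pi, F x θ with hφ
  have hucont : ContinuousOn u U := hu.1.continuousOn
  have hmemU : ∀ x : ℝ, |x| ≤ r → ∀ θ : ℝ,
      z₀ + (x:ℂ) * Complex.exp (↑θ * Complex.I) ∈ Metric.closedBall z₀ r := by
    intro x hx θ
    rw [Metric.mem_closedBall, dist_eq_norm, add_sub_cancel_left, norm_mul,
      Complex.norm_exp_ofReal_mul_I, mul_one, Complex.norm_real, Real.norm_eq_abs]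
    exact hx
  have hFcont : ∀ x : ℝ, |x| ≤ r → Continuous (F x) := by
    intro x hx
    exact ((Complex.continuous_ofReal.comp
        (hucont.comp_continuous (cont_path z₀ x) (fun θ => hball (hmemU x hx θ)))).mul
      (Complex.continuous_exp.comp ((Complex.continuous_ofReal.mul continuous_const).neg)))
  have hF'cont : ∀ x : ℝ, |x| ≤ r → Continuous (F' x) := by
    intro x hx
    have hA : Continuous fun θ:ℝ => fd u (z₀ + (x:ℂ) * Complex.exp (↑θ * Complex.I)) :=
      (harm_fd_contOn hU hu).comp_continuous (cont_path z₀ x) (fun θ => hball (hmemU x hx θ))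
    exact ((Complex.continuous_ofReal.comp (Complex.continuous_re.comp (hA.mul cont_exp_tI))).mul
      (Complex.continuous_exp.comp ((Complex.continuous_ofReal.mul continuous_const).neg)))
  have hderiv : ∀ s₀ ∈ Set.uIcc (0:ℝ) (r/2), HasDerivAt φ ((Real.pi : ℂ) * fd u z₀) s₀ := by
    intro s₀ hs₀
    rw [Set.uIcc_of_le (by positivity)] at hs₀
    have hs₀r : |s₀| ≤ r/2 := by
      rw [_root_.abs_of_nonneg hs₀.1]; exact hs₀.2
    have hballmem : ∀ x ∈ Metric.ball s₀ (r/4), |x| ≤ r := by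
      intro x hx
      rw [Metric.mem_ball, Real.dist_eq] at hx
      calc |x| = |x - s₀ + s₀| := by ring_nf
        _ ≤ |x - s₀| + |s₀| := abs_add_le _ _
        _ ≤ r := by linarith
    have key := (intervalIntegral.hasDerivAt_integral_of_dominated_loc_of_deriv_le
      (F := F) (F' := F') (x₀ := s₀) (a := 0) (b := 2*Real.pi) (bound := fun _ => Cf)
      (μ := MeasureTheory.volume)
      (s := Metric.ball s₀ (r/4)) (Metric.ball_mem_nhds s₀ (by positivity))
      (by
        filter_upwards [Metric.ball_mem_nhds s₀ (by positivity : (0:ℝ) < r/4)] with x hx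
        exact ((hFcont x (hballmem x hx)).aestronglyMeasurable).restrict)
      ((hFcont s₀ (hs₀r.trans (by linarith))).intervalIntegrable _ _)
      (((hF'cont s₀ (hs₀r.trans (by linarith))).aestronglyMeasurable).restrict)
      (by
        refine Filter.Eventually.of_forall (fun θ => fun _ x hx => ?_)
        have hz : z₀ + (x:ℂ) * Complex.exp (↑θ * Complex.I) ∈ Metric.closedBall z₀ r :=
          hmemU x (hballmem x hx) θ
        rw [hF']
        simp only []
        rw [norm_mul, norm_exp_neg_tI, mul_one, Complex.norm_real, Real.norm_eq_abs]
        calc |(fd u (z₀ + (x:ℂ) * Complex.exp (↑θ * Complex.I))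
              * Complex.exp (↑θ * Complex.I)).re|
            ≤ ‖fd u (z₀ + (x:ℂ) * Complex.exp (↑θ * Complex.I))
              * Complex.exp (↑θ * Complex.I)‖ := Complex.abs_re_le_norm _
          _ = ‖fd u (z₀ + (x:ℂ) * Complex.exp (↑θ * Complex.I))‖ := by
              rw [norm_mul, Complex.norm_exp_ofReal_mul_I, mul_one]
          _ ≤ Cf := hCf _ hz)
      (intervalIntegrable_const)
      (by
        refine Filter.Eventually.of_forall (fun θ => fun _ x hx => ?_)
        have hzU : z₀ + (x:ℂ) * Complex.exp (↑θ * Complex.I) ∈ U :=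
          hball (hmemU x (hballmem x hx) θ)
        have hpath : HasDerivAt (fun y:ℝ => z₀ + (y:ℂ) * Complex.exp (↑θ * Complex.I))
            (Complex.exp (↑θ * Complex.I)) x := by
          have h1 : (fun y:ℝ => z₀ + (y:ℂ) * Complex.exp (↑θ * Complex.I))
              = fun y:ℝ => z₀ + y • Complex.exp (↑θ * Complex.I) := by
            funext y; rw [Complex.real_smul]
          rw [h1]
          simpa using ((hasDerivAt_id x).smul_const (Complex.exp (↑θ * Complex.I))).const_add z₀
        have h2 : HasDerivAt (fun y:ℝ => u (z₀ + (y:ℂ) * Complex.exp (↑θ * Complex.I)))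
            ((fd u (z₀ + (x:ℂ) * Complex.exp (↑θ * Complex.I))
              * Complex.exp (↑θ * Complex.I)).re) x :=
          by have := (harm_hasFDerivAt hU hu hzU).comp_hasDerivAt x hpath; exact this
        have h3 := (Complex.ofRealCLM.hasFDerivAt.comp_hasDerivAt x h2).mul_const
          (Complex.exp (-(↑θ * Complex.I)))
        exact h3))
    have hkey2 := key.2
    simp only [hF'] at hkey2
    rw [ident hU hu hr hball hs₀.1 (lt_of_le_of_lt hs₀.2 (by linarith))] at hkey2
    rw [hφ]
    exact hkey2
  have hFTC := intervalIntegral.integral_eq_sub_of_hasDerivAt hderiv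
    (intervalIntegrable_const)
  rw [intervalIntegral.integral_const] at hFTC
  have hφ0 : φ 0 = 0 := by
    rw [hφ]
    simp only [Complex.ofReal_zero, zero_mul, add_zero, hF]
    rw [intervalIntegral.integral_const_mul]
    have : (∫ θ in (0:ℝ)..2*Real.pi, Complex.exp (-(↑θ * Complex.I))) = 0 := by
      rw [intervalIntegral.integral_congr (g := fun θ:ℝ => Complex.exp ((-Complex.I) * ↑θ))
        (fun θ _ => by rw [show -((θ:ℂ)*Complex.I) = (-Complex.I)*(θ:ℂ) from by ring])]
      refine exp_circle_int (neg_ne_zero.mpr Complex.I_ne_zero) ?_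
      rw [show (-Complex.I) * (2 * (Real.pi:ℂ)) = -(2*(Real.pi:ℂ)*Complex.I) from by ring,
        Complex.exp_neg, Complex.exp_two_pi_mul_I, inv_one]
    rw [this, mul_zero]
  rw [hφ0] at hFTC
  simp only [sub_zero] at hFTC
  have heq : ((r/2 : ℝ) : ℂ) * ((Real.pi : ℂ) * fd u z₀) = φ (r/2) := by
    rw [← hFTC, Complex.real_smul]
  have hnorm : ‖φ (r/2)‖ ≤ C * |2*Real.pi - 0| := by
    refine intervalIntegral.norm_integral_le_of_norm_le_const (fun θ _ => ?_)
    rw [hF]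
    simp only []
    rw [norm_mul, norm_exp_neg_tI, mul_one, Complex.norm_real, Real.norm_eq_abs]
    exact hC _ (hmemU (r/2) (by rw [_root_.abs_of_nonneg (by positivity)]; linarith) θ)
  rw [← heq] at hnorm
  simp only [sub_zero] at hnorm
  rw [norm_mul, norm_mul, Complex.norm_real, Real.norm_eq_abs,
    _root_.abs_of_nonneg (by positivity : (0:ℝ) ≤ r/2), Complex.norm_real,
    Real.norm_eq_abs, _root_.abs_of_nonneg Real.pi_pos.le,
    _root_.abs_of_nonneg (by positivity : (0:ℝ) ≤ 2*Real.pi)] at hnorm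
  have hπ := Real.pi_pos
  rw [le_div_iff₀ hr]
  nlinarith [norm_nonneg (fd u z₀)]

section MAIN
open Metric Filter
variable {U : Set ℂ} {u v : ℂ → ℝ} {z : ℂ}

lemma harm_inner_diff (hU : IsOpen U) (hu : HarmonicOnSet u U) (hz : z ∈ U) (w : ℂ) :
    DifferentiableAt ℝ (fun y => fderiv ℝ u y w) z :=
  (((ContinuousLinearMap.apply ℝ ℝ w).hasFDerivAt).comp z
    (harm_fderiv_hasFDerivAt hU hu hz)).differentiableAt

lemma harm_sub (hU : IsOpen U) (hu : HarmonicOnSet u U) (hv : HarmonicOnSet v U) :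
    HarmonicOnSet (fun w => u w - v w) U := by
  refine ⟨hu.1.sub hv.1, fun z hz => ?_⟩
  have he : ∀ w₀ : ℂ, (fun w => fderiv ℝ (fun x => u x - v x) w w₀)
      =ᶠ[nhds z] (fun w => fderiv ℝ u w w₀ - fderiv ℝ v w w₀) := by
    intro w₀
    filter_upwards [hU.mem_nhds hz] with w hw
    rw [fderiv_fun_sub (harm_diffAt hU hu hw) (harm_diffAt hU hv hw),
      ContinuousLinearMap.sub_apply]
  rw [(he 1).fderiv_eq, (he Complex.I).fderiv_eq,
    fderiv_fun_sub (harm_inner_diff hU hu hz 1) (harm_inner_diff hU hv hz 1),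
    fderiv_fun_sub (harm_inner_diff hU hu hz Complex.I) (harm_inner_diff hU hv hz Complex.I),
    ContinuousLinearMap.sub_apply, ContinuousLinearMap.sub_apply]
  have h1 := hu.2 z hz
  have h2 := hv.2 z hz
  linarith

lemma fd_sub (hU : IsOpen U) (hu : HarmonicOnSet u U) (hv : HarmonicOnSet v U) (hz : z ∈ U) :
    fd (fun w => u w - v w) z = fd u z - fd v z := by
  simp only [fd, fderiv_fun_sub (harm_diffAt hU hu hz) (harm_diffAt hU hv hz),
    ContinuousLinearMap.sub_apply]
  push_cast
  ring

lemma harm_lip (hU : IsOpen U) (hu : HarmonicOnSet u U) {a b : ℂ} {ρ C : ℝ} (hρ : 0 < ρ)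
    (hsub : Metric.closedBall a (2*ρ) ⊆ U) (hC : ∀ w ∈ Metric.closedBall a (2*ρ), |u w| ≤ C)
    (hb : b ∈ Metric.closedBall a ρ) : |u b - u a| ≤ (4*C/ρ) * dist b a := by
  have hss : Metric.closedBall a ρ ⊆ Metric.closedBall a (2*ρ) :=
    Metric.closedBall_subset_closedBall (by linarith)
  have hbound : ∀ w ∈ Metric.closedBall a ρ, ‖T (fd u w)‖ ≤ 4*C/ρ := by
    intro w hw
    have hw2 : Metric.closedBall w ρ ⊆ Metric.closedBall a (2*ρ) := by
      refine Metric.closedBall_subset_closedBall' ?_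
      rw [Metric.mem_closedBall] at hw
      linarith
    refine (T_norm_le _).trans ?_
    exact grad_bound hU hu hρ (hw2.trans hsub) (fun w' hw' => hC w' (hw2 hw'))
  have := Convex.norm_image_sub_le_of_norm_hasFDerivWithin_le
    (f := u) (f' := fun w => T (fd u w)) (s := Metric.closedBall a ρ)
    (fun w hw => (harm_hasFDerivAt hU hu (hsub (hss hw))).hasFDerivWithinAt)
    hbound (convex_closedBall a ρ) (Metric.mem_closedBall_self hρ.le) hb
  rw [Real.norm_eq_abs] at this
  rw [dist_eq_norm]
  exact this
end MAIN

noncomputable def TL : ℂ →L[ℝ] (ℂ →L[ℝ] ℝ) :=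
  LinearMap.mkContinuous
    { toFun := T
      map_add' := fun a b => by ext v; simp [T_apply, add_mul]
      map_smul' := fun r a => by
        ext v
        simp [T_apply, Complex.real_smul]
        ring_nf }
    1 (fun c => by simpa using T_norm_le c)

@[simp] lemma TL_apply (c : ℂ) : TL c = T c := rfl

theorem stmt7 (U : Set ℂ) (hU : IsOpen U) (h : ℕ → ℂ → ℝ) (M : ℝ)
    (hharm : ∀ n, HarmonicOnSet (h n) U)
    (hbd : ∀ n, ∀ z ∈ U, |h n z| ≤ M)
    (S : Set ℂ) (hSU : S ⊆ U) (hdense : U ⊆ closure S)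
    (hconv : ∀ z ∈ S, ∃ L : ℝ, Filter.Tendsto (fun n => h n z) Filter.atTop (nhds L)) :
    ∃ g : ℂ → ℝ, HarmonicOnSet g U ∧
      ∀ K ⊆ U, IsCompact K → TendstoUniformlyOn (fun n z => h n z) g Filter.atTop K := by
  classical
  have hbd' : ∀ n, ∀ z ∈ U, |h n z| ≤ |M| + 1 := fun n z hz =>
    (hbd n z hz).trans (by linarith [le_abs_self M])
  -- Step A : uniform Cauchy on compact subsets
  have hUC : ∀ K, K ⊆ U → IsCompact K →
      UniformCauchySeqOn (fun n z => h n z) Filter.atTop K := by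
    intro K hKU hK
    rw [Metric.uniformCauchySeqOn_iff]
    obtain ⟨δ, hδ, hδU⟩ := hK.exists_cthickening_subset_open hU hKU
    set ρ := δ/2 with hρdef
    have hρ : 0 < ρ := by positivity
    have hcb : ∀ a ∈ K, Metric.closedBall a (2*ρ) ⊆ U := by
      intro a ha
      refine subset_trans ?_ hδU
      rw [show 2*ρ = δ by rw [hρdef]; ring]
      exact Metric.closedBall_subset_cthickening ha δ
    set L := 4*(|M|+1)/ρ with hL
    have hLpos : 0 < L := by positivity
    have hlip : ∀ n, ∀ a ∈ K, ∀ b ∈ Metric.closedBall a ρ,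
        |h n b - h n a| ≤ L * dist b a := by
      intro n a ha b hb
      exact harm_lip hU (hharm n) hρ (hcb a ha) (fun w hw => hbd' n w (hcb a ha hw)) hb
    intro ε hε
    set η := min ρ (ε/(6*L)) with hη
    have hηpos : 0 < η := lt_min hρ (by positivity)
    have hηρ : η ≤ ρ := min_le_left _ _
    have hηL : L * η ≤ ε/6 := by
      calc L * η ≤ L * (ε/(6*L)) := by
            exact mul_le_mul_of_nonneg_left (min_le_right _ _) hLpos.le
        _ = ε/6 := by field_simp
    -- finite cover by balls of radius η/2 centered in K
    obtain ⟨t, htK, htfin, htcov⟩ := hK.elim_finite_subcover_image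
      (ι := ℂ) (c := fun z => Metric.ball z (η/2)) (b := K)
      (fun z _ => Metric.isOpen_ball)
      (fun z hz => Set.mem_biUnion hz (Metric.mem_ball_self (by positivity)))
    -- choose a point of S near each center
    have hpick : ∀ z ∈ t, ∃ s ∈ S, dist z s < η/2 := by
      intro z hzt
      have : z ∈ closure S := hdense (hKU (htK hzt))
      exact Metric.mem_closure_iff.mp this (η/2) (by positivity)
    choose! sz hszS hszd using hpick
    -- Cauchy at each chosen point
    have hNex : ∀ z ∈ t, ∃ N, ∀ m ≥ N, ∀ n ≥ N,
        dist (h m (sz z)) (h n (sz z)) < ε/3 := by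
      intro z hzt
      obtain ⟨Lz, hLz⟩ := hconv (sz z) (hszS z hzt)
      have : CauchySeq (fun n => h n (sz z)) := hLz.cauchySeq
      exact Metric.cauchySeq_iff.mp this (ε/3) (by positivity)
    choose! Nf hNf using hNex
    set N := htfin.toFinset.sup Nf with hNdef
    refine ⟨N, fun m hm n hn x hx => ?_⟩
    obtain ⟨z, hzt, hxz⟩ := Set.mem_iUnion₂.mp (htcov hx)
    have hzN : Nf z ≤ N := Finset.le_sup (htfin.mem_toFinset.mpr hzt)
    have hdxs : dist (sz z) x ≤ η := by
      calc dist (sz z) x ≤ dist (sz z) z + dist z x := dist_triangle _ _ _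
        _ ≤ η/2 + η/2 := by
            rw [Metric.mem_ball] at hxz
            have h1 := hszd z hzt
            rw [dist_comm] at h1 hxz
            exact add_le_add h1.le hxz.le
        _ = η := by ring
    have hszcb : sz z ∈ Metric.closedBall x ρ := by
      rw [Metric.mem_closedBall]
      exact hdxs.trans hηρ
    have hlips : ∀ k, |h k (sz z) - h k x| ≤ ε/6 := by
      intro k
      calc |h k (sz z) - h k x| ≤ L * dist (sz z) x := hlip k x hx _ hszcb
        _ ≤ L * η := mul_le_mul_of_nonneg_left hdxs hLpos.le
        _ ≤ ε/6 := hηL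
    have hmid : dist (h m (sz z)) (h n (sz z)) < ε/3 :=
      hNf z hzt m (le_trans hzN hm) n (le_trans hzN hn)
    calc dist (h m x) (h n x)
        ≤ dist (h m x) (h m (sz z)) + dist (h m (sz z)) (h n (sz z))
          + dist (h n (sz z)) (h n x) := dist_triangle4 _ _ _ _
      _ < ε/6 + ε/3 + ε/6 := by
          refine add_lt_add_of_lt_of_le (add_lt_add_of_le_of_lt ?_ hmid) ?_
          · rw [Real.dist_eq, abs_sub_comm]; exact hlips m
          · rw [Real.dist_eq]; exact hlips n
      _ ≤ ε := by linarith
  -- Step B : pointwise limits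
  have hcauchy : ∀ z ∈ U, CauchySeq (fun n => h n z) := by
    intro z hz
    rw [Metric.cauchySeq_iff]
    have hs := Metric.uniformCauchySeqOn_iff.mp
      (hUC {z} (Set.singleton_subset_iff.mpr hz) isCompact_singleton)
    intro ε hε
    obtain ⟨N, hN⟩ := hs ε hε
    exact ⟨N, fun m hm n hn => hN m hm n hn z rfl⟩
  set g : ℂ → ℝ := fun z => limUnder Filter.atTop (fun n => h n z) with hg
  have hglim : ∀ z ∈ U, Filter.Tendsto (fun n => h n z) Filter.atTop (nhds (g z)) :=
    fun z hz => (hcauchy z hz).tendsto_limUnder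
  have hTU : ∀ K, K ⊆ U → IsCompact K →
      TendstoUniformlyOn (fun n z => h n z) g Filter.atTop K :=
    fun K hKU hK => (hUC K hKU hK).tendstoUniformlyOn_of_tendsto
      (fun z hz => hglim z (hKU hz))
  -- Step C : uniform Cauchy of the complex gradients on compacts
  have hfdUC : ∀ K, K ⊆ U → IsCompact K →
      UniformCauchySeqOn (fun n z => fd (h n) z) Filter.atTop K := by
    intro K hKU hK
    obtain ⟨δ, hδ, hδU⟩ := hK.exists_cthickening_subset_open hU hKU
    set ρ := δ/2 with hρdef
    have hρ : 0 < ρ := by positivity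
    have hK' : IsCompact (Metric.cthickening δ K) := hK.cthickening
    have hUCK' := Metric.uniformCauchySeqOn_iff.mp (hUC _ hδU hK')
    rw [Metric.uniformCauchySeqOn_iff]
    intro ε hε
    obtain ⟨N, hN⟩ := hUCK' (ρ*ε/9) (by positivity)
    refine ⟨N, fun m hm n hn x hx => ?_⟩
    have hsub : Metric.closedBall x ρ ⊆ Metric.cthickening δ K := by
      refine subset_trans
        (Metric.closedBall_subset_closedBall (by rw [hρdef]; linarith : ρ ≤ δ)) ?_
      exact Metric.closedBall_subset_cthickening hx δ
    have hbound : ∀ w ∈ Metric.closedBall x ρ, |h m w - h n w| ≤ ρ*ε/9 := by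
      intro w hw
      have := hN m hm n hn w (hsub hw)
      rw [Real.dist_eq] at this
      exact this.le
    have hgb := grad_bound hU (harm_sub hU (hharm m) (hharm n)) hρ
      (hsub.trans hδU) hbound
    rw [fd_sub hU (hharm m) (hharm n) (hKU hx)] at hgb
    rw [dist_eq_norm]
    calc ‖fd (h m) x - fd (h n) x‖ ≤ 4*(ρ*ε/9)/ρ := hgb
      _ = 4*ε/9 := by field_simp
      _ < ε := by linarith
  have hfdcauchy : ∀ z ∈ U, CauchySeq (fun n => fd (h n) z) := by
    intro z hz
    rw [Metric.cauchySeq_iff]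
    have hs := Metric.uniformCauchySeqOn_iff.mp
      (hfdUC {z} (Set.singleton_subset_iff.mpr hz) isCompact_singleton)
    intro ε hε
    obtain ⟨N, hN⟩ := hs ε hε
    exact ⟨N, fun m hm n hn => hN m hm n hn z rfl⟩
  set fl : ℂ → ℂ := fun z => limUnder Filter.atTop (fun n => fd (h n) z) with hfl
  have hfllim : ∀ z ∈ U, Filter.Tendsto (fun n => fd (h n) z) Filter.atTop (nhds (fl z)) :=
    fun z hz => (hfdcauchy z hz).tendsto_limUnder
  have hfdTU : ∀ K, K ⊆ U → IsCompact K →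
      TendstoUniformlyOn (fun n z => fd (h n) z) fl Filter.atTop K :=
    fun K hKU hK => (hfdUC K hKU hK).tendstoUniformlyOn_of_tendsto
      (fun z hz => hfllim z (hKU hz))
  have hfdTLU : TendstoLocallyUniformlyOn (fun n z => fd (h n) z) fl Filter.atTop U :=
    (tendstoLocallyUniformlyOn_iff_forall_isCompact hU).mpr
      (fun K hKU hK => hfdTU K hKU hK)
  have hflhol : DifferentiableOn ℂ fl U :=
    hfdTLU.differentiableOn (Filter.Eventually.of_forall
      (fun n => fun z hz => (harm_fd_diffAt hU (hharm n) hz).differentiableWithinAt)) hU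
  -- Step D : derivative of g
  have hTTLU : TendstoLocallyUniformlyOn (fun n z => T (fd (h n) z)) (fun z => T (fl z))
      Filter.atTop U := by
    refine (tendstoLocallyUniformlyOn_iff_forall_isCompact hU).mpr ?_
    intro K hKU hK
    rw [Metric.tendstoUniformlyOn_iff]
    intro ε hε
    filter_upwards [Metric.tendstoUniformlyOn_iff.mp (hfdTU K hKU hK) ε hε] with n hn x hx
    calc dist (T (fl x)) (T (fd (h n) x)) = ‖T (fl x) - T (fd (h n) x)‖ := dist_eq_norm _ _
      _ = ‖T (fl x - fd (h n) x)‖ := by rw [T_sub]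
      _ ≤ ‖fl x - fd (h n) x‖ := T_norm_le _
      _ = dist (fl x) (fd (h n) x) := (dist_eq_norm _ _).symm
      _ < ε := hn x hx
  have hgfder : ∀ z ∈ U, HasFDerivAt g (T (fl z)) z := by
    intro z hz
    exact hasFDerivAt_of_tendstoLocallyUniformlyOn hU hTTLU
      (fun n => fun w hw => harm_hasFDerivAt hU (hharm n) hw)
      (fun w hw => hglim w hw) hz
  -- Step E : the limit is harmonic
  have hfl_cd : ContDiffOn ℝ 1 fl U := (hflhol.contDiffOn hU).restrict_scalars ℝ
  have hg_cd : ContDiffOn ℝ 2 g U := by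
    have h2 : ContDiffOn ℝ ((1:WithTop ℕ∞)+1) g U := by
      rw [contDiffOn_succ_iff_fderiv_of_isOpen hU]
      refine ⟨fun z hz => (hgfder z hz).differentiableAt.differentiableWithinAt,
        by simp, ?_⟩
      exact (TL.contDiff.comp_contDiffOn hfl_cd).congr
        (fun z hz => by rw [(hgfder z hz).fderiv]; rfl)
    rwa [one_add_one_eq_two] at h2
  refine ⟨g, ⟨hg_cd, ?_⟩, fun K hKU hK => hTU K hKU hK⟩
  intro z hz
  have hfl_dAt : DifferentiableAt ℂ fl z := hflhol.differentiableAt (hU.mem_nhds hz)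
  have hflD : HasDerivAt fl (deriv fl z) z := hfl_dAt.hasDerivAt
  set c' := deriv fl z with hc'
  have hQ : ∀ v : ℂ, HasFDerivAt (fun w => T (fl w) v)
      ((T v).comp
        (((1 : ℂ →L[ℂ] ℂ).smulRight c').restrictScalars ℝ)) z := by
    intro v
    have h1 : (fun w => T (fl w) v) = fun w => T v (fl w) := by
      funext w; simp [T_apply, mul_comm]
    rw [h1]
    exact (T v).hasFDerivAt.comp z (hflD.hasFDerivAt.restrictScalars ℝ)
  have he : ∀ v : ℂ, (fun w => fderiv ℝ g w v) =ᶠ[nhds z] fun w => T (fl w) v := by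
    intro v
    filter_upwards [hU.mem_nhds hz] with w hw
    rw [(hgfder w hw).fderiv]
  rw [(he 1).fderiv_eq, (he Complex.I).fderiv_eq, (hQ 1).fderiv, (hQ Complex.I).fderiv]
  have hval : ∀ v d : ℂ,
      ((T v).comp (((1 : ℂ →L[ℂ] ℂ).smulRight c').restrictScalars ℝ)) d
        = (v * (d * c')).re := by
    intro v d
    simp [T_apply]
  rw [hval, hval]
  have h1 : (1:ℂ) * ((1:ℂ) * c') = c' := by ring
  have h2 : Complex.I * (Complex.I * c') = -c' := by
    rw [← mul_assoc, Complex.I_mul_I]; ring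
  rw [h1, h2, Complex.neg_re]
  ring
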